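/- Let u : [0, T] → ℝ be continuous with u(0) = 0, and suppose there exist Q > 0 and c ∈ (0, 1] such that u(t) ≥ (Q/2)t + c² ∫_0^t ∫_0^s u(r) dr ds for all t ∈ [0, T] with u nonnegative on [0,T]. Then u(t) ≥ (Q/(2c)) sinh(ct) for all t ∈ [0, T]. -/
import Mathlib


open MeasureTheory intervalIntegral

private noncomputable def F10 (c : ℝ) (k : ℕ) (s : ℝ) : ℝ :=
  c ^ (2 * k) * s ^ (2 * k + 1) / (Nat.factorial (2 * k + 1))

private lemma F10_cont (c : ℝ) (k : ℕ) : Continuous (F10 c k) := by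
  unfold F10; fun_prop

private lemma F10_inner (c : ℝ) (k : ℕ) (s : ℝ) :
    ∫ r in (0:ℝ)..s, F10 c k r
      = c ^ (2 * k) * s ^ (2 * k + 2) / (Nat.factorial (2 * k + 2)) := by
  have h1 : (fun r : ℝ => F10 c k r)
      = fun r : ℝ => (c ^ (2 * k) / (Nat.factorial (2 * k + 1))) * r ^ (2 * k + 1) := by
    funext r; unfold F10; ring
  rw [h1, intervalIntegral.integral_const_mul, integral_pow]
  have hfac : (Nat.factorial (2 * k + 2) : ℝ)
      = (2 * k + 2 : ℕ) * (Nat.factorial (2 * k + 1)) := by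
    rw [show 2 * k + 2 = (2 * k + 1) + 1 from rfl, Nat.factorial_succ]
    push_cast; ring
  have h2 : ((Nat.factorial (2 * k + 1) : ℝ)) ≠ 0 := by
    exact_mod_cast Nat.factorial_ne_zero _
  have h3 : ((2 * k + 1 + 1 : ℕ) : ℝ) ≠ 0 := by positivity
  rw [hfac]
  push_cast
  field_simp
  ring_nf

private lemma F10_double (c : ℝ) (k : ℕ) (t : ℝ) :
    ∫ s in (0:ℝ)..t, ∫ r in (0:ℝ)..s, F10 c k r
      = c ^ (2 * k) * t ^ (2 * k + 3) / (Nat.factorial (2 * k + 3)) := by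
  have h1 : (fun s : ℝ => ∫ r in (0:ℝ)..s, F10 c k r)
      = fun s : ℝ => (c ^ (2 * k) / (Nat.factorial (2 * k + 2))) * s ^ (2 * k + 2) := by
    funext s; rw [F10_inner]; ring
  rw [h1, intervalIntegral.integral_const_mul, integral_pow]
  have hfac : (Nat.factorial (2 * k + 3) : ℝ)
      = (2 * k + 3 : ℕ) * (Nat.factorial (2 * k + 2)) := by
    rw [show 2 * k + 3 = (2 * k + 2) + 1 from rfl, Nat.factorial_succ]
    push_cast; ring
  have h2 : ((Nat.factorial (2 * k + 2) : ℝ)) ≠ 0 := by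
    exact_mod_cast Nat.factorial_ne_zero _
  have h3 : ((2 * k + 2 + 1 : ℕ) : ℝ) ≠ 0 := by positivity
  rw [hfac]
  push_cast
  field_simp
  ring_nf

/-- Grönwall-type comparison: if a continuous nonnegative `u` with `u 0 = 0`
satisfies `u(t) ≥ (Q/2)t + c² ∫₀ᵗ∫₀ˢ u(r) dr ds` on `[0,T]` with `Q > 0` and
`c ∈ (0,1]`, then `u(t) ≥ (Q/(2c)) sinh(ct)` on `[0,T]`. -/
theorem stmt10 (T Q c : ℝ) (hT : 0 ≤ T) (hQ : 0 < Q) (hc0 : 0 < c) (hc1 : c ≤ 1)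
    (u : ℝ → ℝ) (hu : ContinuousOn u (Set.Icc 0 T)) (h0 : u 0 = 0)
    (hnn : ∀ t ∈ Set.Icc (0 : ℝ) T, 0 ≤ u t)
    (hineq : ∀ t ∈ Set.Icc (0 : ℝ) T,
      (Q / 2) * t + c ^ 2 * ∫ s in (0 : ℝ)..t, ∫ r in (0 : ℝ)..s, u r ≤ u t) :
    ∀ t ∈ Set.Icc (0 : ℝ) T, (Q / (2 * c)) * Real.sinh (c * t) ≤ u t := by
  have hcne : c ≠ 0 := ne_of_gt hc0
  -- interval integrability of u on [0,s] for s ∈ [0,T]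
  have huint : ∀ s ∈ Set.Icc (0:ℝ) T, IntervalIntegrable u volume 0 s := by
    intro s hs
    apply ContinuousOn.intervalIntegrable
    rw [Set.uIcc_of_le hs.1]
    exact hu.mono (Set.Icc_subset_Icc le_rfl hs.2)
  -- main induction: partial sums lower-bound u
  have key : ∀ m : ℕ, ∀ t ∈ Set.Icc (0:ℝ) T,
      (Q / 2) * ∑ k ∈ Finset.range m, F10 c k t ≤ u t := by
    intro m
    induction m with
    | zero => intro t ht; simpa using hnn t ht
    | succ m ih =>
      intro t ht
      obtain ⟨ht0, htT⟩ := ht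
      set Pm : ℝ → ℝ := fun r => (Q / 2) * ∑ k ∈ Finset.range m, F10 c k r with hPm
      have hPmcont : Continuous Pm := by
        apply Continuous.mul continuous_const
        exact continuous_finset_sum _ (fun k _ => F10_cont c k)
      -- inner comparison
      have hinner : ∀ s ∈ Set.Icc (0:ℝ) t,
          (∫ r in (0:ℝ)..s, Pm r) ≤ ∫ r in (0:ℝ)..s, u r := by
        intro s hs
        have hsT : s ∈ Set.Icc (0:ℝ) T := ⟨hs.1, hs.2.trans htT⟩
        apply intervalIntegral.integral_mono_on hs.1
          (hPmcont.intervalIntegrable _ _) (huint s hsT)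
        intro r hr
        exact ih r ⟨hr.1, hr.2.trans hsT.2⟩
      -- outer comparison
      have hGint : IntervalIntegrable (fun s => ∫ r in (0:ℝ)..s, u r) volume 0 t := by
        apply ContinuousOn.intervalIntegrable
        apply intervalIntegral.continuousOn_primitive_interval
        rw [Set.uIcc_of_le ht0]
        exact (hu.mono (Set.Icc_subset_Icc le_rfl htT)).integrableOn_Icc
      have hPint : IntervalIntegrable (fun s => ∫ r in (0:ℝ)..s, Pm r) volume 0 t := by
        have h1 : (fun s : ℝ => ∫ r in (0:ℝ)..s, Pm r)
            = fun s => (Q / 2) * ∑ k ∈ Finset.range m,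
                (c ^ (2 * k) * s ^ (2 * k + 2) / (Nat.factorial (2 * k + 2))) := by
          funext s
          rw [hPm]
          simp only
          rw [intervalIntegral.integral_const_mul,
            intervalIntegral.integral_finset_sum
              (fun k _ => (F10_cont c k).intervalIntegrable _ _)]
          congr 1
          exact Finset.sum_congr rfl fun k _ => F10_inner c k s
        rw [h1]
        apply Continuous.intervalIntegrable
        fun_prop
      have houter : (∫ s in (0:ℝ)..t, ∫ r in (0:ℝ)..s, Pm r)
          ≤ ∫ s in (0:ℝ)..t, ∫ r in (0:ℝ)..s, u r :=
        intervalIntegral.integral_mono_on ht0 hPint hGint hinner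
      -- compute the double integral of Pm
      have hcomp : (∫ s in (0:ℝ)..t, ∫ r in (0:ℝ)..s, Pm r)
          = (Q / 2) * ∑ k ∈ Finset.range m,
              (c ^ (2 * k) * t ^ (2 * k + 3) / (Nat.factorial (2 * k + 3))) := by
        have h1 : (fun s : ℝ => ∫ r in (0:ℝ)..s, Pm r)
            = fun s => ∑ k ∈ Finset.range m,
                ((Q / 2) * (c ^ (2 * k) * s ^ (2 * k + 2) / (Nat.factorial (2 * k + 2)))) := by
          funext s
          rw [hPm]
          simp only
          rw [intervalIntegral.integral_const_mul,
            intervalIntegral.integral_finset_sum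
              (fun k _ => (F10_cont c k).intervalIntegrable _ _),
            Finset.mul_sum]
          exact Finset.sum_congr rfl fun k _ => by rw [F10_inner c k s]
        rw [h1, intervalIntegral.integral_finset_sum (fun k _ => by
          apply Continuous.intervalIntegrable; fun_prop)]
        rw [Finset.mul_sum]
        refine Finset.sum_congr rfl fun k _ => ?_
        rw [intervalIntegral.integral_const_mul]
        congr 1
        have h2 : (fun s : ℝ => c ^ (2 * k) * s ^ (2 * k + 2) / (Nat.factorial (2 * k + 2)))
            = fun s => (c ^ (2 * k) / (Nat.factorial (2 * k + 2))) * s ^ (2 * k + 2) := by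
          funext s; ring
        rw [h2, intervalIntegral.integral_const_mul, integral_pow]
        have hfac : (Nat.factorial (2 * k + 3) : ℝ)
            = (2 * k + 3 : ℕ) * (Nat.factorial (2 * k + 2)) := by
          rw [show 2 * k + 3 = (2 * k + 2) + 1 from rfl, Nat.factorial_succ]
          push_cast; ring
        have hne : ((Nat.factorial (2 * k + 2) : ℝ)) ≠ 0 := by
          exact_mod_cast Nat.factorial_ne_zero _
        rw [hfac]
        push_cast
        field_simp
        ring_nf
      -- assemble
      have hstep := hineq t ⟨ht0, htT⟩
      have hc2 : (0:ℝ) ≤ c ^ 2 := sq_nonneg c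
      have h5 : (Q / 2) * t + c ^ 2 * ∫ s in (0:ℝ)..t, ∫ r in (0:ℝ)..s, Pm r ≤ u t := by
        refine le_trans ?_ hstep
        gcongr
      rw [hcomp] at h5
      refine le_trans (le_of_eq ?_) h5
      have hF0 : F10 c 0 t = t := by unfold F10; simp
      have hterm : ∀ k : ℕ, F10 c (k + 1) t
          = c ^ 2 * (c ^ (2 * k) * t ^ (2 * k + 3) / (Nat.factorial (2 * k + 3))) := by
        intro k
        unfold F10
        rw [show 2 * (k + 1) + 1 = 2 * k + 3 from by ring,
          show 2 * (k + 1) = 2 * k + 2 from by ring]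
        ring
      have hsum : ∑ k ∈ Finset.range m, F10 c (k + 1) t
          = ∑ k ∈ Finset.range m,
              c ^ 2 * (c ^ (2 * k) * t ^ (2 * k + 3) / (Nat.factorial (2 * k + 3))) :=
        Finset.sum_congr rfl fun k _ => hterm k
      rw [Finset.sum_range_succ', hF0, hsum, ← Finset.mul_sum]
      ring
  -- take the limit
  intro t ht
  have hsinh := Real.hasSum_sinh (c * t)
  have hmul := hsinh.mul_left (Q / (2 * c))
  have hterm : (fun k : ℕ => (Q / (2 * c)) * ((c * t) ^ (2 * k + 1) / (Nat.factorial (2 * k + 1))))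
      = fun k : ℕ => (Q / 2) * F10 c k t := by
    funext k
    unfold F10
    rw [mul_pow, pow_succ c (2 * k)]
    field_simp
  rw [hterm] at hmul
  have htend := hmul.tendsto_sum_nat
  refine le_of_tendsto htend ?_
  filter_upwards with m
  rw [← Finset.mul_sum]
  exact key m t ht
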